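/- arXiv:1105.5016 — 6 statements merged into one kernel-verified Lean document; each statement's English description precedes it below -/
import Mathlib

section
/- If ψ : ℝⁿ → ℂ is a negative definite function with ψ(0) = 0, then the square root of its modulus is subadditive: for all ξ, η ∈ ℝⁿ, √|ψ(ξ+η)| ≤ √|ψ(ξ)| + √|ψ(η)|. -/
/-!
At the two points `ξ, -η` the kernel matrix `(ψ ξⱼ + conj (ψ ξₖ) - ψ (ξⱼ - ξₖ))` is positive
semidefinite. Since `ψ (-x) = conj (ψ x)`, its diagonal is `2 Re ψ ξ, 2 Re ψ η` and its
off-diagonal entries are `D = ψ ξ + ψ η - ψ (ξ + η)` and `conj D`, so its nonnegative determinant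
gives `|D| ≤ 2 √|ψ ξ| √|ψ η|`. Hence `|ψ (ξ + η)| ≤ |ψ ξ| + |ψ η| + |D| ≤ (√|ψ ξ| + √|ψ η|)²`.
-/

/-- `ψ` is negative definite in the sense of Schoenberg: `ψ 0` is a nonnegative real
and for every finite family `ξ₁, …, ξ_m` the matrix
`(ψ (ξ j) + conj (ψ (ξ k)) - ψ (ξ j - ξ k))` is positive semidefinite. -/
def IsNegativeDefinite {E : Type*} [AddGroup E] (ψ : E → ℂ) : Prop :=
  0 ≤ (ψ 0).re ∧ (ψ 0).im = 0 ∧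
  ∀ (m : ℕ) (ξ : Fin m → E) (c : Fin m → ℂ),
    0 ≤ (∑ j, ∑ k,
        (ψ (ξ j) + (starRingEnd ℂ) (ψ (ξ k)) - ψ (ξ j - ξ k)) * c j * (starRingEnd ℂ) (c k)).re ∧
    (∑ j, ∑ k,
        (ψ (ξ j) + (starRingEnd ℂ) (ψ (ξ k)) - ψ (ξ j - ξ k)) * c j * (starRingEnd ℂ) (c k)).im = 0

open ComplexConjugate Matrix
open scoped ComplexOrder

namespace IsNegativeDefinite

section AddGroup

variable {E : Type*} [AddGroup E] {ψ : E → ℂ}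

theorem conj_map_zero (hψ : IsNegativeDefinite ψ) : conj (ψ 0) = ψ 0 :=
  Complex.conj_eq_iff_im.mpr hψ.2.1

theorem map_neg (hψ : IsNegativeDefinite ψ) (x : E) : ψ (-x) = conj (ψ x) := by
  have h1 := (hψ.2.2 2 ![0, x] ![1, 1]).2
  have h2 := (hψ.2.2 2 ![0, x] ![1, Complex.I]).2
  apply Complex.ext <;> simp [Fin.sum_univ_two, hψ.2.1] at h1 h2 ⊢ <;> linarith

theorem re_map_zero_le (hψ : IsNegativeDefinite ψ) (x : E) : (ψ 0).re ≤ 2 * (ψ x).re := by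
  simpa [two_mul] using (hψ.2.2 1 ![x] ![1]).1

theorem re_nonneg (hψ : IsNegativeDefinite ψ) (x : E) : 0 ≤ (ψ x).re := by
  linarith [hψ.1, hψ.re_map_zero_le x]

variable {m : ℕ}

def kernelMatrix (ψ : E → ℂ) (ξ : Fin m → E) : Matrix (Fin m) (Fin m) ℂ :=
  Matrix.of fun j k => ψ (ξ j) + conj (ψ (ξ k)) - ψ (ξ j - ξ k)

theorem posSemidef_kernelMatrix (hψ : IsNegativeDefinite ψ) (ξ : Fin m → E) :
    (kernelMatrix ψ ξ).PosSemidef := by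
  refine .of_dotProduct_mulVec_nonneg ?_ fun c => ?_
  · ext j k
    simp only [kernelMatrix, conjTranspose_apply, of_apply, star_sub, star_add, RCLike.star_def,
      ← hψ.map_neg, neg_neg, neg_sub, sub_left_inj]
    ring
  · -- the defining sum pairs `c j` with `conj (c k)`, i.e. it is the form at `star c`
    obtain ⟨hre, him⟩ := hψ.2.2 m ξ (star c)
    convert Complex.nonneg_iff.mpr ⟨hre, him.symm⟩ using 1
    simp only [kernelMatrix, dotProduct, mulVec, Finset.mul_sum, of_apply, Pi.star_apply,
      Complex.star_def, Complex.conj_conj]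
    exact Finset.sum_congr rfl fun _ _ => Finset.sum_congr rfl fun _ _ => by ring

end AddGroup

variable {E : Type*} [AddCommGroup E] {ψ : E → ℂ}

theorem norm_sub_sq_le (hψ : IsNegativeDefinite ψ) (ξ η : E) :
    ‖ψ ξ + ψ η - ψ (ξ + η)‖ ^ 2 ≤ (2 * (ψ ξ).re - (ψ 0).re) * (2 * (ψ η).re - (ψ 0).re) := by
  have hdet := (Complex.nonneg_iff.mp (hψ.posSemidef_kernelMatrix ![ξ, -η]).det_nonneg).1
  have hψ0 : ψ 0 = ((ψ 0).re : ℂ) := (Complex.conj_eq_iff_re.mp hψ.conj_map_zero).symm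
  have hdiag : ∀ x, ψ x + conj (ψ x) - ψ 0 = ((2 * (ψ x).re - (ψ 0).re : ℝ) : ℂ) := by
    intro x
    conv_lhs => rw [Complex.add_conj, hψ0]
    push_cast
    ring
  have hoff : conj (ψ η) + conj (ψ ξ) - conj (ψ (ξ + η)) = conj (ψ ξ + ψ η - ψ (ξ + η)) := by
    rw [map_sub, map_add, add_comm]
  simp only [det_fin_two, kernelMatrix, of_apply, Matrix.cons_val_zero, Matrix.cons_val_one,
    sub_self, sub_neg_eq_add, neg_sub_left, hψ.map_neg, Complex.conj_conj] at hdet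
  rw [add_comm (conj (ψ η)), hdiag, hdiag, hoff, Complex.mul_conj, Complex.normSq_eq_norm_sq] at hdet
  norm_cast at hdet
  linarith

theorem norm_sub_sq_le_four_mul_norm (hψ : IsNegativeDefinite ψ) (h0 : ψ 0 = 0) (ξ η : E) :
    ‖ψ ξ + ψ η - ψ (ξ + η)‖ ^ 2 ≤ 4 * ‖ψ ξ‖ * ‖ψ η‖ := by
  have h := hψ.norm_sub_sq_le ξ η
  rw [h0, Complex.zero_re, sub_zero, sub_zero] at h
  nlinarith [hψ.re_nonneg ξ, hψ.re_nonneg η, Complex.re_le_norm (ψ ξ), Complex.re_le_norm (ψ η)]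

end IsNegativeDefinite

theorem Real.sqrt_le_sqrt_add_sqrt {x y z d : ℝ} (hx : 0 ≤ x) (hy : 0 ≤ y) (hz : z ≤ x + y + d)
    (hd : d ^ 2 ≤ 4 * x * y) : √z ≤ √x + √y := by
  have hd' : d ≤ 2 * √x * √y := by
    refine (abs_le_of_sq_le_sq' ?_ (by positivity)).2
    rw [mul_pow, mul_pow, Real.sq_sqrt hx, Real.sq_sqrt hy]
    linarith
  rw [Real.sqrt_le_iff]
  refine ⟨by positivity, ?_⟩
  nlinarith [Real.sq_sqrt hx, Real.sq_sqrt hy]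

/-- If `ψ : ℝⁿ → ℂ` is negative definite with `ψ 0 = 0`, then `√|ψ|` is subadditive. -/
theorem statement0 {n : ℕ} (ψ : EuclideanSpace ℝ (Fin n) → ℂ)
    (hneg : IsNegativeDefinite ψ) (h0 : ψ 0 = 0) :
    ∀ ξ η : EuclideanSpace ℝ (Fin n),
      Real.sqrt (‖ψ (ξ + η)‖) ≤
        Real.sqrt (‖ψ ξ‖) + Real.sqrt (‖ψ η‖) := by
  intro ξ η
  have htriangle : ‖ψ (ξ + η)‖ ≤ ‖ψ ξ‖ + ‖ψ η‖ + ‖ψ ξ + ψ η - ψ (ξ + η)‖ := by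
    have := norm_sub_le (ψ ξ + ψ η) (ψ ξ + ψ η - ψ (ξ + η))
    rw [sub_sub_cancel] at this
    linarith [norm_add_le (ψ ξ) (ψ η)]
  exact Real.sqrt_le_sqrt_add_sqrt (norm_nonneg _) (norm_nonneg _) htriangle
    (hneg.norm_sub_sq_le_four_mul_norm h0 ξ η)
end

section
/- Let ψ ∈ 𝒩ᵐ(ℝⁿ) with associated radius functions m(r) = inf{|η| : √|ψ(η)| = r} and M(r) = sup{|η| : √|ψ(η)| = r}. Then for all 0 < r < R < liminf_{|ξ|→∞} √|ψ(ξ)| the Lebesgue volumes of metric balls satisfy λ(B^{d_ψ}(0,R)) ≤ (M(R)/m(r))ⁿ · λ(B^{d_ψ}(0,r)). -/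
open MeasureTheory ENNReal

/-! With `f = √|ψ|`, which is continuous, vanishes at `0` and exceeds `R` far out, the
intermediate value theorem along rays shows that every point of `{f ≥ r}` lies outside a point
of the level set `{f = r}`, and every point of `{f ≤ R}` lies inside a point of `{f = R}`. Hence
the Euclidean ball of radius `m(r)` lies in `{f < r}` and `{f < R}` lies in the closed ball of
radius `M(R)`; the bound follows from the scaling of Lebesgue measure on balls. -/

open Metric Filter Set Module

section LevelSets

variable {E : Type*} [NormedAddCommGroup E] {f : E → ℝ} {c : ℝ}

theorem sInf_norm_preimage_pos (hf : Continuous f) (h0 : f 0 < c) (hne : (f ⁻¹' {c}).Nonempty) :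
    0 < sInf (norm '' (f ⁻¹' {c})) := by
  obtain ⟨ε, hε, hball⟩ := Metric.isOpen_iff.1 (isOpen_lt hf continuous_const) 0 h0
  refine hε.trans_le (le_csInf (hne.image _) ?_)
  rintro _ ⟨η, hη, rfl⟩
  by_contra! hlt
  exact (hball (mem_ball_zero_iff.2 hlt)).ne hη

variable [NormedSpace ℝ E]

theorem exists_eq_norm_le_of_le (hf : Continuous f) (h0 : f 0 ≤ c) {ξ : E} (hξ : c ≤ f ξ) :
    ∃ η, f η = c ∧ ‖η‖ ≤ ‖ξ‖ := by
  have hray : ContinuousOn (fun t : ℝ => f (t • ξ)) (Icc 0 1) := by fun_prop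
  have hc : c ∈ Icc (f ((0 : ℝ) • ξ)) (f ((1 : ℝ) • ξ)) := by
    rw [zero_smul, one_smul]; exact ⟨h0, hξ⟩
  obtain ⟨t, ht, htc⟩ := intermediate_value_Icc zero_le_one hray hc
  refine ⟨t • ξ, htc, ?_⟩
  rw [norm_smul, Real.norm_of_nonneg ht.1]
  exact mul_le_of_le_one_left (norm_nonneg ξ) ht.2

theorem exists_eq_le_norm_of_le (hf : Continuous f)
    (hlarge : ∀ᶠ η in Bornology.cobounded E, c ≤ f η) {ξ : E} (hξ0 : ξ ≠ 0) (hξ : f ξ ≤ c) : ∃ η, f η = c ∧ ‖ξ‖ ≤ ‖η‖ := by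
  have hray : Tendsto (fun t : ℝ => t • ξ) atTop (Bornology.cobounded E) := by
    rw [← tendsto_norm_atTop_iff_cobounded]
    simp_rw [norm_smul]
    exact (tendsto_norm_atTop_atTop.comp tendsto_id).atTop_mul_const (norm_pos_iff.2 hξ0)
  have hξ' : f ((1 : ℝ) • ξ) ≤ c := by rwa [one_smul]
  obtain ⟨t, ht, htc⟩ := isPreconnected_Ici.intermediate_value₂_eventually₁ self_mem_Ici
    (le_principal_iff.2 (Ici_mem_atTop 1)) (by fun_prop : ContinuousOn (fun t : ℝ => f (t • ξ)) _)
    continuousOn_const hξ' (hray.eventually hlarge)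
  refine ⟨t • ξ, htc, ?_⟩
  rw [norm_smul, Real.norm_of_nonneg (zero_le_one.trans ht)]
  exact le_mul_of_one_le_left (norm_nonneg ξ) ht

theorem ball_sInf_norm_preimage_subset (hf : Continuous f) (h0 : f 0 ≤ c) :
    ball 0 (sInf (norm '' (f ⁻¹' {c}))) ⊆ {ξ | f ξ < c} := by
  intro ξ hξ
  by_contra! hcξ
  obtain ⟨η, hη, hle⟩ := exists_eq_norm_le_of_le hf h0 (not_lt.1 hcξ)
  have hbdd : BddBelow (norm '' (f ⁻¹' {c})) := ⟨0, by rintro _ ⟨η, -, rfl⟩; exact norm_nonneg η⟩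
  exact (csInf_le hbdd ⟨η, hη, rfl⟩).not_gt (hle.trans_lt (mem_ball_zero_iff.1 hξ))

theorem subset_closedBall_sSup_norm_preimage (hf : Continuous f)
    (hlarge : ∀ᶠ η in Bornology.cobounded E, c < f η) :
    {ξ | f ξ ≤ c} ⊆ closedBall 0 (sSup (norm '' (f ⁻¹' {c}))) := by
  obtain ⟨K, -, hK⟩ := hasBasis_cobounded_norm.eventually_iff.1 hlarge
  have hbdd : BddAbove (norm '' (f ⁻¹' {c})) := by
    refine ⟨K, ?_⟩
    rintro _ ⟨η, hη, rfl⟩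
    by_contra! hKη
    exact (hK hKη.le).ne' hη
  intro ξ hξ
  rw [mem_closedBall_zero_iff]
  rcases eq_or_ne ξ 0 with rfl | hξ0
  · rw [norm_zero]
    exact Real.sSup_nonneg (by rintro _ ⟨η, -, rfl⟩; exact norm_nonneg η)
  · obtain ⟨η, hη, hle⟩ := exists_eq_le_norm_of_le hf (hlarge.mono fun _ => le_of_lt) hξ0 hξ
    exact hle.trans (le_csSup hbdd ⟨η, hη, rfl⟩)

end LevelSets

theorem MeasureTheory.Measure.addHaar_le_mul_of_subset_closedBall_of_ball_subset {E : Type*}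
    [NormedAddCommGroup E] [NormedSpace ℝ E] [MeasurableSpace E] [BorelSpace E]
    [FiniteDimensional ℝ E] (μ : Measure E) [μ.IsAddHaarMeasure] {A B : Set E} {x y : E}
    {ρ₁ ρ₂ : ℝ} (hρ₁ : 0 < ρ₁) (hA : A ⊆ closedBall x ρ₂) (hB : ball y ρ₁ ⊆ B) :
    μ A ≤ ENNReal.ofReal ((ρ₂ / ρ₁) ^ finrank ℝ E) * μ B := by
  rcases lt_or_ge ρ₂ 0 with hρ₂ | hρ₂
  · have hA_empty : A = ∅ := subset_empty_iff.1 (hA.trans (closedBall_eq_empty.2 hρ₂).subset)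
    simp [hA_empty]
  calc μ A ≤ μ (closedBall x ρ₂) := measure_mono hA
    _ = ENNReal.ofReal ((ρ₂ / ρ₁) ^ finrank ℝ E) * μ (ball y ρ₁) := by
      rw [Measure.addHaar_closedBall μ x hρ₂, Measure.addHaar_ball_of_pos μ y hρ₁, ← mul_assoc,
        ← ENNReal.ofReal_mul (by positivity), ← mul_pow, div_mul_cancel₀ _ hρ₁.ne']
    _ ≤ ENNReal.ofReal ((ρ₂ / ρ₁) ^ finrank ℝ E) * μ B := by gcongr

theorem statement8_general {n : ℕ} (ψ : EuclideanSpace ℝ (Fin n) → ℂ)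
    (hcont : Continuous ψ) (h0 : ψ 0 = 0)
    (m M : ℝ → ℝ)
    (hm : ∀ r, m r = sInf {x : ℝ | ∃ η : EuclideanSpace ℝ (Fin n),
        Real.sqrt (‖ψ η‖) = r ∧ ‖η‖ = x})
    (hM : ∀ r, M r = sSup {x : ℝ | ∃ η : EuclideanSpace ℝ (Fin n),
        Real.sqrt (‖ψ η‖) = r ∧ ‖η‖ = x})
    (r R : ℝ) (hr : 0 < r) (hrR : r < R)
    (hR : (R : EReal) < Filter.liminf
        (fun ξ : EuclideanSpace ℝ (Fin n) => ((Real.sqrt (‖ψ ξ‖) : ℝ) : EReal))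
        (Bornology.cobounded (EuclideanSpace ℝ (Fin n)))) :
    volume {ξ : EuclideanSpace ℝ (Fin n) | Real.sqrt (‖ψ ξ‖) < R} ≤
      ENNReal.ofReal ((M R / m r) ^ n) *
        volume {ξ : EuclideanSpace ℝ (Fin n) | Real.sqrt (‖ψ ξ‖) < r} := by
  set f := fun ξ => Real.sqrt ‖ψ ξ‖
  have hf : Continuous f := by fun_prop
  have hf0 : f 0 = 0 := by simp [f, h0]
  obtain rfl | hn := Nat.eq_zero_or_pos n
  · have hsub : {ξ | f ξ < R} ⊆ {ξ | f ξ < r} := fun ξ _ => by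
      show f ξ < r
      rw [Subsingleton.elim ξ 0, hf0]; exact hr
    simpa using measure_mono hsub
  have : Nonempty (Fin n) := ⟨⟨0, hn⟩⟩
  have hlarge : ∀ᶠ ξ in Bornology.cobounded _, R < f ξ :=
    (eventually_lt_of_lt_liminf hR).mono fun _ => EReal.coe_lt_coe_iff.1
  have hf0r : f 0 < r := hf0 ▸ hr
  obtain ⟨ηr, hηr⟩ : r ∈ range f := mem_range_of_exists_le_of_exists_ge hf ⟨0, hf0r.le⟩
    (hlarge.mono fun _ h => hrR.le.trans h.le).exists
  have hmr : 0 < m r := by rw [hm r]; exact sInf_norm_preimage_pos hf hf0r ⟨ηr, hηr⟩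
  have hsmall : ball 0 (m r) ⊆ {ξ | f ξ < r} := by
    rw [hm r]; exact ball_sInf_norm_preimage_subset hf hf0r.le
  have hbig : {ξ | f ξ < R} ⊆ closedBall 0 (M R) := by
    rw [hM R]
    exact (ofPred_subset_ofPred.2 fun _ => le_of_lt).trans
      (subset_closedBall_sSup_norm_preimage hf hlarge)
  simpa only [finrank_euclideanSpace_fin] using
    Measure.addHaar_le_mul_of_subset_closedBall_of_ball_subset volume hmr hbig hsmall

/-- Volume comparison for metric balls of `d_ψ`:
`λ(B^{d_ψ}(0,R)) ≤ (M(R)/m(r))ⁿ λ(B^{d_ψ}(0,r))` for `0 < r < R < liminf √|ψ|`. -/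
theorem statement8 {n : ℕ} (ψ : EuclideanSpace ℝ (Fin n) → ℂ)
    (hcont : Continuous ψ) (hneg : IsNegativeDefinite ψ) (h0 : ψ 0 = 0)
    (hnonper : ∀ ξ : EuclideanSpace ℝ (Fin n), ψ ξ = 0 → ξ = 0)
    (hmetr : (0 : EReal) < Filter.liminf
        (fun ξ : EuclideanSpace ℝ (Fin n) => ((‖ψ ξ‖ : ℝ) : EReal))
        (Bornology.cobounded (EuclideanSpace ℝ (Fin n))))
    (m M : ℝ → ℝ)
    (hm : ∀ r, m r = sInf {x : ℝ | ∃ η : EuclideanSpace ℝ (Fin n),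
        Real.sqrt (‖ψ η‖) = r ∧ ‖η‖ = x})
    (hM : ∀ r, M r = sSup {x : ℝ | ∃ η : EuclideanSpace ℝ (Fin n),
        Real.sqrt (‖ψ η‖) = r ∧ ‖η‖ = x})
    (r R : ℝ) (hr : 0 < r) (hrR : r < R)
    (hR : (R : EReal) < Filter.liminf
        (fun ξ : EuclideanSpace ℝ (Fin n) => ((Real.sqrt (‖ψ ξ‖) : ℝ) : EReal))
        (Bornology.cobounded (EuclideanSpace ℝ (Fin n)))) :
    volume {ξ : EuclideanSpace ℝ (Fin n) | Real.sqrt (‖ψ ξ‖) < R} ≤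
      ENNReal.ofReal ((M R / m r) ^ n) *
        volume {ξ : EuclideanSpace ℝ (Fin n) | Real.sqrt (‖ψ ξ‖) < r} :=
  statement8_general ψ hcont h0 m M hm hM r R hr hrR hR
end

section
/- Let f be an unbounded Bernstein function with f(0) = 0 and set ψ(ξ) = f(|ξ|²) on ℝⁿ. Then the metric measure space (ℝⁿ, d_ψ, λ) has the volume doubling property if and only if there exists C > 1 with liminf_{r→∞} f(Cr)/f(r) > 1 and liminf_{r→0} f(Cr)/f(r) > 1. -/
open MeasureTheory ENNReal

/-- `f` is a Bernstein function: smooth on `(0,∞)`, nonnegative, and its derivatives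
alternate in sign: `(-1)^(k-1) f^{(k)} ≥ 0` for all `k ≥ 1`. -/
def IsBernstein (f : ℝ → ℝ) : Prop :=
  (∀ x : ℝ, 0 < x → 0 ≤ f x) ∧ ContDiffOn ℝ (⊤ : ℕ∞) f (Set.Ioi (0 : ℝ)) ∧
  ∀ k : ℕ, 1 ≤ k → ∀ x : ℝ, 0 < x →
    0 ≤ (-1 : ℝ) ^ (k - 1) * iteratedDerivWithin k f (Set.Ioi (0 : ℝ)) x

/-- For `ψ(ξ) = f(|ξ|²)` with `f` an unbounded Bernstein function, `f 0 = 0`,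
volume doubling of `(ℝⁿ, d_ψ, λ)` holds iff `liminf_{r→∞} f(Cr)/f(r) > 1` and
`liminf_{r→0} f(Cr)/f(r) > 1` for some `C > 1`. -/
theorem statement10 {n : ℕ} (hn : 0 < n) (f : ℝ → ℝ)
    (hf : IsBernstein f) (hf0 : f 0 = 0)
    (hunb : ∀ A : ℝ, ∃ x : ℝ, 0 < x ∧ A < f x) :
    (∃ c₂ : ℝ, 0 < c₂ ∧ ∀ (x : EuclideanSpace ℝ (Fin n)) (r : ℝ), 0 < r →
        volume {η : EuclideanSpace ℝ (Fin n) | Real.sqrt (f (‖η - x‖ ^ 2)) < 2 * r} ≤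
          ENNReal.ofReal c₂ *
            volume {η : EuclideanSpace ℝ (Fin n) | Real.sqrt (f (‖η - x‖ ^ 2)) < r}) ↔
    (∃ C : ℝ, 1 < C ∧
      (1 : EReal) < Filter.liminf (fun r : ℝ => ((f (C * r) / f r : ℝ) : EReal)) Filter.atTop ∧
      (1 : EReal) < Filter.liminf (fun r : ℝ => ((f (C * r) / f r : ℝ) : EReal))
          (nhdsWithin 0 (Set.Ioi (0 : ℝ)))) := by
  -- ## Basic consequences of the Bernstein property
  have hd1 : ∀ x : ℝ, 0 < x → 0 ≤ deriv f x := by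
    intro x hx
    have h := hf.2.2 1 le_rfl x hx
    rwa [pow_zero, one_mul, iteratedDerivWithin_one,
      derivWithin_of_isOpen isOpen_Ioi hx] at h
  have hd2 : ∀ x : ℝ, 0 < x → deriv (deriv f) x ≤ 0 := by
    intro x hx
    have h := hf.2.2 2 (by norm_num) x hx
    have e : iteratedDerivWithin 2 f (Set.Ioi 0) x = deriv (deriv f) x := by
      rw [iteratedDerivWithin_eq_iteratedFDerivWithin,
        show iteratedFDerivWithin ℝ 2 f (Set.Ioi 0) x = iteratedFDeriv ℝ 2 f x from
          iteratedFDerivWithin_of_isOpen 2 isOpen_Ioi hx,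
        ← iteratedDeriv_eq_iteratedFDeriv, iteratedDeriv_succ, iteratedDeriv_one]
    rw [e] at h
    norm_num at h
    linarith
  have hcont : ContinuousOn f (Set.Ioi (0:ℝ)) := hf.2.1.continuousOn
  have hdiff : DifferentiableOn ℝ f (Set.Ioi (0:ℝ)) := hf.2.1.differentiableOn (by simp)
  have hdsmooth : ContDiffOn ℝ (⊤ : ℕ∞) (deriv f) (Set.Ioi (0:ℝ)) :=
    hf.2.1.deriv_of_isOpen isOpen_Ioi (by simp)
  have hdcont : ContinuousOn (deriv f) (Set.Ioi (0:ℝ)) := hdsmooth.continuousOn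
  have hddiff : DifferentiableOn ℝ (deriv f) (Set.Ioi (0:ℝ)) := hdsmooth.differentiableOn (by simp)
  have hmono : MonotoneOn f (Set.Ioi (0:ℝ)) := by
    apply monotoneOn_of_deriv_nonneg (convex_Ioi 0) hcont
    · rw [interior_Ioi]; exact hdiff
    · rw [interior_Ioi]; exact fun x hx => hd1 x hx
  have hanti : AntitoneOn (deriv f) (Set.Ioi (0:ℝ)) := by
    apply antitoneOn_of_deriv_nonpos (convex_Ioi 0) hdcont
    · rw [interior_Ioi]; exact hddiff
    · rw [interior_Ioi]; exact fun x hx => hd2 x hx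
  have hdpos : ∀ x : ℝ, 0 < x → 0 < deriv f x := by
    intro x hx
    rcases lt_or_eq_of_le (hd1 x hx) with h | h
    · exact h
    -- deriv f x = 0: then f is bounded above by f x, contradiction
    exfalso
    have hantif : AntitoneOn f (Set.Ici x) := by
      apply antitoneOn_of_deriv_nonpos (convex_Ici x)
      · exact hcont.mono (fun y hy => lt_of_lt_of_le hx hy)
      · rw [interior_Ici]
        exact hdiff.mono (fun y hy => lt_trans hx hy)
      · rw [interior_Ici]
        intro y hy
        have := hanti (Set.mem_Ioi.2 hx) (Set.mem_Ioi.2 (lt_trans hx hy)) (le_of_lt hy)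
        linarith [h]
    obtain ⟨y, hy, hylt⟩ := hunb (f x)
    rcases le_or_gt y x with hyx | hyx
    · exact absurd (hmono (Set.mem_Ioi.2 hy) (Set.mem_Ioi.2 hx) hyx) (by linarith)
    · exact absurd (hantif (Set.mem_Ici.2 le_rfl) (Set.mem_Ici.2 hyx.le) hyx.le) (by linarith)
  have hsm : StrictMonoOn f (Set.Ioi (0:ℝ)) := by
    apply strictMonoOn_of_deriv_pos (convex_Ioi 0) hcont
    rw [interior_Ioi]; exact fun x hx => hdpos x hx
  have hpos : ∀ t : ℝ, 0 < t → 0 < f t := by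
    intro t ht
    have h1 : (0:ℝ) ≤ f (t/2) := hf.1 _ (by linarith)
    have h2 : f (t/2) < f t := hsm (Set.mem_Ioi.2 (by linarith)) (Set.mem_Ioi.2 ht) (by linarith)
    linarith
  have hsm0 : StrictMonoOn f (Set.Ici (0:ℝ)) := by
    intro x hx y hy hxy
    rcases eq_or_lt_of_le (Set.mem_Ici.1 hx) with h0 | h0
    · rw [← h0, hf0]
      exact hpos y (h0 ▸ hxy)
    · exact hsm (Set.mem_Ioi.2 h0) (Set.mem_Ioi.2 (lt_trans h0 hxy)) hxy
  have hmono0 : MonotoneOn f (Set.Ici (0:ℝ)) := hsm0.monotoneOn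
  have hbdd : BddBelow (f '' Set.Ioi (0:ℝ)) := by
    refine ⟨0, ?_⟩
    rintro y ⟨t, ht, rfl⟩
    exact hf.1 t ht
  have hne : (f '' Set.Ioi (0:ℝ)).Nonempty := ⟨f 1, ⟨1, Set.mem_Ioi.2 one_pos, rfl⟩⟩
  set a := sInf (f '' Set.Ioi (0:ℝ)) with ha_def
  have ha0 : 0 ≤ a := le_csInf hne (by rintro y ⟨t, ht, rfl⟩; exact hf.1 t ht)
  rcases eq_or_lt_of_le ha0 with haz | ha
  · -- ### Case `a = 0` : `f` is a bijection of `[0,∞)`.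
    haveI : Nontrivial (EuclideanSpace ℝ (Fin n)) :=
      Module.nontrivial_of_finrank_pos (R := ℝ)
        (by rw [finrank_euclideanSpace_fin]; exact hn)
    -- surjectivity onto `(0,∞)`
    have hsurj : ∀ s : ℝ, 0 < s → ∃ t, 0 < t ∧ f t = s := by
      intro s hs
      obtain ⟨y, hy, hylt⟩ := exists_lt_of_csInf_lt hne (show a < s by rw [← haz]; exact hs)
      obtain ⟨t1, ht1, rfl⟩ := hy
      obtain ⟨t2, ht2, hs2⟩ := hunb s
      have ht1' : (0:ℝ) < t1 := Set.mem_Ioi.1 ht1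
      have h12 : t1 < t2 := by
        by_contra hcon
        push_neg at hcon
        have : f t2 ≤ f t1 := hmono (Set.mem_Ioi.2 ht2) ht1 hcon
        linarith
      have hIcc : Set.Icc t1 t2 ⊆ Set.Ioi (0:ℝ) :=
        fun u hu => Set.mem_Ioi.2 (lt_of_lt_of_le ht1' hu.1)
      obtain ⟨t, htmem, htfs⟩ :=
        intermediate_value_Icc h12.le (hcont.mono hIcc) ⟨hylt.le, hs2.le⟩
      exact ⟨t, lt_of_lt_of_le ht1' htmem.1, htfs⟩
    -- the inverse function `g`
    obtain ⟨g, hg⟩ : ∃ g : ℝ → ℝ, ∀ s, 0 < s → 0 < g s ∧ f (g s) = s := by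
      refine ⟨fun s => if hs : 0 < s then (hsurj s hs).choose else 0, fun s hs => ?_⟩
      simp only [dif_pos hs]
      exact (hsurj s hs).choose_spec
    have hgf : ∀ t : ℝ, 0 < t → g (f t) = t := by
      intro t ht
      exact hsm.injOn (Set.mem_Ioi.2 (hg _ (hpos t ht)).1) (Set.mem_Ioi.2 ht)
        ((hg _ (hpos t ht)).2)
    have hkey : ∀ u : ℝ, 0 ≤ u → ∀ s : ℝ, 0 < s → (f u < s ↔ u < g s) := by
      intro u hu s hs
      conv_lhs => rw [← (hg s hs).2]
      exact hsm0.lt_iff_lt (Set.mem_Ici.2 hu) (Set.mem_Ici.2 (hg s hs).1.le)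
    -- the metric balls are Euclidean balls
    have hball : ∀ (x : EuclideanSpace ℝ (Fin n)) (r : ℝ), 0 < r →
        {η : EuclideanSpace ℝ (Fin n) | Real.sqrt (f (‖η - x‖ ^ 2)) < r}
          = Metric.ball x (Real.sqrt (g (r ^ 2))) := by
      intro x r hr
      ext η
      simp only [Set.mem_setOf_eq, Metric.mem_ball, dist_eq_norm]
      rw [Real.sqrt_lt' hr, hkey _ (sq_nonneg _) _ (pow_pos hr 2)]
      exact (Real.lt_sqrt (norm_nonneg _)).symm
    have hvol : ∀ (x : EuclideanSpace ℝ (Fin n)) (r : ℝ), 0 < r →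
        volume {η : EuclideanSpace ℝ (Fin n) | Real.sqrt (f (‖η - x‖ ^ 2)) < r}
          = ENNReal.ofReal (Real.sqrt (g (r ^ 2)) ^ n) *
            volume (Metric.ball (0 : EuclideanSpace ℝ (Fin n)) 1) := by
      intro x r hr
      rw [hball x r hr,
        Measure.addHaar_ball_of_pos (volume) (x := x)
          (Real.sqrt_pos.2 (hg _ (pow_pos hr 2)).1),
        finrank_euclideanSpace_fin]
    have hv0 : volume (Metric.ball (0 : EuclideanSpace ℝ (Fin n)) 1) ≠ 0 :=
      (Metric.measure_ball_pos _ _ one_pos).ne'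
    have hvtop : volume (Metric.ball (0 : EuclideanSpace ℝ (Fin n)) 1) ≠ ⊤ :=
      measure_ball_lt_top.ne
    -- the intermediate condition
    set Q : Prop := ∃ c : ℝ, 0 < c ∧ ∀ t : ℝ, 0 < t → 4 * f t ≤ f (c * t) with hQdef
    have hLQ : (∃ c₂ : ℝ, 0 < c₂ ∧ ∀ (x : EuclideanSpace ℝ (Fin n)) (r : ℝ), 0 < r →
        volume {η : EuclideanSpace ℝ (Fin n) | Real.sqrt (f (‖η - x‖ ^ 2)) < 2 * r} ≤
          ENNReal.ofReal c₂ *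
            volume {η : EuclideanSpace ℝ (Fin n) | Real.sqrt (f (‖η - x‖ ^ 2)) < r}) → Q := by
      rintro ⟨c₂, hc₂, H⟩
      set K := c₂ ^ ((n : ℝ)⁻¹) with hKdef
      have hK : 0 < K := Real.rpow_pos_of_pos hc₂ _
      have hKn : K ^ n = c₂ := Real.rpow_inv_natCast_pow hc₂.le hn.ne'
      refine ⟨K ^ 2, pow_pos hK 2, fun t ht => ?_⟩
      have hs : 0 < f t := hpos t ht
      set r := Real.sqrt (f t) with hrdef
      have hr : 0 < r := Real.sqrt_pos.2 hs
      have h2r : (0:ℝ) < 2 * r := by linarith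
      have H0 := H 0 r hr
      rw [hvol 0 (2 * r) h2r, hvol 0 r hr, ← mul_assoc,
        ENNReal.mul_le_mul_iff_left hv0 hvtop, ← ENNReal.ofReal_mul hc₂.le] at H0
      have Hr : Real.sqrt (g ((2 * r) ^ 2)) ^ n ≤ c₂ * Real.sqrt (g (r ^ 2)) ^ n :=
        (ENNReal.ofReal_le_ofReal_iff
          (mul_nonneg hc₂.le (pow_nonneg (Real.sqrt_nonneg _) n))).1 H0
      have h1 : Real.sqrt (g ((2 * r) ^ 2)) ≤ K * Real.sqrt (g (r ^ 2)) := by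
        have hKn' : (K * Real.sqrt (g (r ^ 2))) ^ n = c₂ * Real.sqrt (g (r ^ 2)) ^ n := by
          rw [mul_pow, hKn]
        have h : Real.sqrt (g ((2 * r) ^ 2)) ^ n ≤ (K * Real.sqrt (g (r ^ 2))) ^ n := by
          rw [hKn']; exact Hr
        exact (pow_le_pow_iff_left₀ (Real.sqrt_nonneg _)
          (mul_nonneg hK.le (Real.sqrt_nonneg _)) hn.ne').1 h
      have h2 : g ((2 * r) ^ 2) ≤ K ^ 2 * g (r ^ 2) := by
        have hg4 : 0 ≤ g ((2 * r) ^ 2) := (hg _ (pow_pos h2r 2)).1.le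
        calc g ((2 * r) ^ 2) = Real.sqrt (g ((2 * r) ^ 2)) ^ 2 := (Real.sq_sqrt hg4).symm
          _ ≤ (K * Real.sqrt (g (r ^ 2))) ^ 2 := pow_le_pow_left₀ (Real.sqrt_nonneg _) h1 2
          _ = K ^ 2 * g (r ^ 2) := by
              rw [mul_pow, Real.sq_sqrt (hg _ (pow_pos hr 2)).1.le]
      have hr2 : r ^ 2 = f t := Real.sq_sqrt hs.le
      have h4 : (2 * r) ^ 2 = 4 * f t := by rw [mul_pow, hr2]; norm_num
      rw [h4, hr2, hgf t ht] at h2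
      have h5 : f (g (4 * f t)) ≤ f (K ^ 2 * t) :=
        hmono0 (Set.mem_Ici.2 (hg _ (by linarith)).1.le)
          (Set.mem_Ici.2 (mul_pos (pow_pos hK 2) ht).le) h2
      rwa [(hg _ (by linarith : (0:ℝ) < 4 * f t)).2] at h5
    have hQL : Q → (∃ c₂ : ℝ, 0 < c₂ ∧ ∀ (x : EuclideanSpace ℝ (Fin n)) (r : ℝ), 0 < r →
        volume {η : EuclideanSpace ℝ (Fin n) | Real.sqrt (f (‖η - x‖ ^ 2)) < 2 * r} ≤
          ENNReal.ofReal c₂ *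
            volume {η : EuclideanSpace ℝ (Fin n) | Real.sqrt (f (‖η - x‖ ^ 2)) < r}) := by
      rintro ⟨c, hc, H⟩
      refine ⟨Real.sqrt c ^ n, pow_pos (Real.sqrt_pos.2 hc) n, fun x r hr => ?_⟩
      rw [hvol x (2 * r) (by linarith), hvol x r hr]
      have hgr : 0 < g (r ^ 2) := (hg _ (pow_pos hr 2)).1
      have key : g ((2 * r) ^ 2) ≤ c * g (r ^ 2) := by
        have h1 : (2 * r) ^ 2 ≤ f (c * g (r ^ 2)) := by
          have hH := H (g (r ^ 2)) hgr
          rw [(hg (r ^ 2) (pow_pos hr 2)).2] at hH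
          calc (2 * r) ^ 2 = 4 * r ^ 2 := by ring
            _ ≤ f (c * g (r ^ 2)) := hH
        have h2r' : (0:ℝ) < (2 * r) ^ 2 := pow_pos (by linarith) 2
        have h2 : f (g ((2 * r) ^ 2)) ≤ f (c * g (r ^ 2)) := by
          rw [(hg _ h2r').2]; exact h1
        exact (hsm0.le_iff_le (Set.mem_Ici.2 (hg _ h2r').1.le)
          (Set.mem_Ici.2 (mul_nonneg hc.le hgr.le))).1 h2
      have hsr : Real.sqrt (g ((2 * r) ^ 2)) ^ n
          ≤ Real.sqrt c ^ n * Real.sqrt (g (r ^ 2)) ^ n := by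
        rw [← mul_pow]
        apply pow_le_pow_left₀ (Real.sqrt_nonneg _)
        rw [← Real.sqrt_mul hc.le]
        exact Real.sqrt_le_sqrt key
      rw [← mul_assoc, ← ENNReal.ofReal_mul (pow_nonneg (Real.sqrt_nonneg _) n)]
      exact mul_le_mul_left (ENNReal.ofReal_le_ofReal hsr) _
    have hQR : Q → (∃ C : ℝ, 1 < C ∧
        (1 : EReal) < Filter.liminf (fun r : ℝ => ((f (C * r) / f r : ℝ) : EReal)) Filter.atTop ∧
        (1 : EReal) < Filter.liminf (fun r : ℝ => ((f (C * r) / f r : ℝ) : EReal))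
            (nhdsWithin 0 (Set.Ioi (0 : ℝ)))) := by
      rintro ⟨c, hc0, H⟩
      have hc1 : 1 < c := by
        by_contra hle
        push_neg at hle
        have h1 := H 1 one_pos
        have h2 : f (c * 1) ≤ f 1 :=
          hmono0 (Set.mem_Ici.2 (by nlinarith)) (Set.mem_Ici.2 zero_le_one) (by linarith)
        have h3 := hpos 1 one_pos
        linarith
      have hlim : ∀ l : Filter ℝ, l.NeBot → (∀ᶠ r in l, 0 < r) →
          (1 : EReal) < Filter.liminf (fun r : ℝ => ((f (c * r) / f r : ℝ) : EReal)) l := by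
        intro l hl hev
        have h4 : ((4 : ℝ) : EReal)
            ≤ Filter.liminf (fun r : ℝ => ((f (c * r) / f r : ℝ) : EReal)) l := by
          refine Filter.le_liminf_of_le (by isBoundedDefault) ?_
          filter_upwards [hev] with r hr
          have hfr := hpos r hr
          have h1 : (4:ℝ) ≤ f (c * r) / f r := (le_div_iff₀ hfr).2 (by linarith [H r hr])
          exact_mod_cast h1
        refine lt_of_lt_of_le ?_ h4
        rw [show (1 : EReal) = ((1:ℝ) : EReal) from rfl]
        exact_mod_cast (by norm_num : (1:ℝ) < 4)
      exact ⟨c, hc1, hlim Filter.atTop (by infer_instance) (Filter.eventually_gt_atTop 0),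
        hlim _ (by infer_instance) (by filter_upwards [self_mem_nhdsWithin] with r hr; exact hr)⟩
    have hRQ : (∃ C : ℝ, 1 < C ∧
        (1 : EReal) < Filter.liminf (fun r : ℝ => ((f (C * r) / f r : ℝ) : EReal)) Filter.atTop ∧
        (1 : EReal) < Filter.liminf (fun r : ℝ => ((f (C * r) / f r : ℝ) : EReal))
            (nhdsWithin 0 (Set.Ioi (0 : ℝ)))) → Q := by
      rintro ⟨C, hC, hinf, h0⟩
      have hC0 : (0:ℝ) < C := lt_trans one_pos hC
      obtain ⟨z1, hz1l, hz1r⟩ := EReal.exists_between_coe_real hinf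
      obtain ⟨z0, hz0l, hz0r⟩ := EReal.exists_between_coe_real h0
      have hz1 : (1:ℝ) < z1 := by exact_mod_cast hz1l
      have hz0 : (1:ℝ) < z0 := by exact_mod_cast hz0l
      have he1 : ∀ᶠ r in Filter.atTop, z1 < f (C * r) / f r := by
        filter_upwards [Filter.eventually_lt_of_lt_liminf hz1r] with r hr
        exact_mod_cast hr
      have he0 : ∀ᶠ r in nhdsWithin 0 (Set.Ioi (0:ℝ)), z0 < f (C * r) / f r := by
        filter_upwards [Filter.eventually_lt_of_lt_liminf hz0r] with r hr
        exact_mod_cast hr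
      obtain ⟨R₀, hR₀⟩ := Filter.eventually_atTop.1 he1
      rw [Filter.eventually_iff, mem_nhdsGT_iff_exists_Ioc_subset] at he0
      obtain ⟨δ, hδpos, hδ⟩ := he0
      have hδpos' : (0:ℝ) < δ := Set.mem_Ioi.1 hδpos
      set M := max δ R₀ with hMdef
      have hδM : δ ≤ M := le_max_left _ _
      set φ : ℝ → ℝ := fun r => f (C * r) / f r with hφdef
      have hφc : ContinuousOn φ (Set.Icc δ M) := by
        apply ContinuousOn.div
        · apply hcont.comp (continuous_const.mul continuous_id).continuousOn
          intro r hr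
          exact Set.mem_Ioi.2 (mul_pos hC0 (lt_of_lt_of_le hδpos' hr.1))
        · exact hcont.mono (fun r hr => Set.mem_Ioi.2 (lt_of_lt_of_le hδpos' hr.1))
        · intro r hr
          exact (hpos r (lt_of_lt_of_le hδpos' hr.1)).ne'
      obtain ⟨r0, hr0K, hr0min⟩ := isCompact_Icc.exists_isMinOn ⟨δ, le_refl δ, hδM⟩ hφc
      have hr0pos : 0 < r0 := lt_of_lt_of_le hδpos' hr0K.1
      have hm : 1 < φ r0 := by
        rw [hφdef]
        simp only
        rw [one_lt_div (hpos r0 hr0pos)]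
        exact hsm (Set.mem_Ioi.2 hr0pos) (Set.mem_Ioi.2 (mul_pos hC0 hr0pos))
          ((lt_mul_iff_one_lt_left hr0pos).2 hC)
      set ε := min (min z1 z0) (φ r0) with hεdef
      have hε : 1 < ε := lt_min (lt_min hz1 hz0) hm
      have hstep : ∀ t : ℝ, 0 < t → ε * f t ≤ f (C * t) := by
        intro t ht
        have hpt := hpos t ht
        have key : ε ≤ φ t := by
          rcases le_or_gt t δ with h | h
          · exact le_trans (le_trans (min_le_left _ _) (min_le_right _ _))
              (hδ ⟨ht, h⟩).le
          · rcases le_or_gt t M with h' | h'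
            · exact le_trans (min_le_right _ _) (isMinOn_iff.1 hr0min t ⟨h.le, h'⟩)
            · have hz : z1 < φ t :=
                hR₀ t (le_of_lt (lt_of_le_of_lt (le_max_right δ R₀) h'))
              exact le_trans (le_trans (min_le_left _ _) (min_le_left _ _)) hz.le
        calc ε * f t ≤ φ t * f t := mul_le_mul_of_nonneg_right key hpt.le
          _ = f (C * t) := div_mul_cancel₀ _ hpt.ne'
      obtain ⟨k, hk⟩ := pow_unbounded_of_one_lt (4:ℝ) hε
      have hiter : ∀ k : ℕ, ∀ t : ℝ, 0 < t → ε ^ k * f t ≤ f (C ^ k * t) := by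
        intro k
        induction k with
        | zero => intro t ht; simp
        | succ k ih =>
          intro t ht
          have h2 : ε ^ k * f t ≤ f (C ^ k * t) := ih t ht
          have h3 : ε * (ε ^ k * f t) ≤ ε * f (C ^ k * t) :=
            mul_le_mul_of_nonneg_left h2 (by linarith)
          have h4 : ε * f (C ^ k * t) ≤ f (C * (C ^ k * t)) :=
            hstep _ (mul_pos (pow_pos hC0 k) ht)
          calc ε ^ (k + 1) * f t = ε * (ε ^ k * f t) := by ring
            _ ≤ ε * f (C ^ k * t) := h3
            _ ≤ f (C * (C ^ k * t)) := h4
            _ = f (C ^ (k + 1) * t) := by ring_nf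
      refine ⟨C ^ k, pow_pos hC0 k, fun t ht => ?_⟩
      have h5 := hiter k t ht
      have h6 : 4 * f t ≤ ε ^ k * f t :=
        mul_le_mul_of_nonneg_right hk.le (hf.1 t ht)
      linarith
    exact ⟨fun h => hQR (hLQ h), fun h => hQL (hRQ h)⟩
  · -- ### Case `a > 0` : both sides fail.
    have notLHS : ¬ (∃ c₂ : ℝ, 0 < c₂ ∧ ∀ (x : EuclideanSpace ℝ (Fin n)) (r : ℝ), 0 < r →
        volume {η : EuclideanSpace ℝ (Fin n) | Real.sqrt (f (‖η - x‖ ^ 2)) < 2 * r} ≤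
          ENNReal.ofReal c₂ *
            volume {η : EuclideanSpace ℝ (Fin n) | Real.sqrt (f (‖η - x‖ ^ 2)) < r}) := by
      rintro ⟨c₂, hc₂, H⟩
      haveI : Nontrivial (EuclideanSpace ℝ (Fin n)) :=
        Module.nontrivial_of_finrank_pos (R := ℝ)
          (by rw [finrank_euclideanSpace_fin]; exact hn)
      have hset1 : {η : EuclideanSpace ℝ (Fin n) | Real.sqrt (f (‖η - 0‖ ^ 2)) < Real.sqrt a}
          = {(0 : EuclideanSpace ℝ (Fin n))} := by
        ext η
        simp only [Set.mem_setOf_eq, Set.mem_singleton_iff, sub_zero]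
        constructor
        · intro h
          by_contra hne'
          have hη : 0 < ‖η‖ ^ 2 := by
            have : ‖η‖ ≠ 0 := norm_ne_zero_iff.2 hne'
            positivity
          have h1 : a ≤ f (‖η‖ ^ 2) := csInf_le hbdd ⟨_, Set.mem_Ioi.2 hη, rfl⟩
          have h2 : Real.sqrt a ≤ Real.sqrt (f (‖η‖ ^ 2)) := Real.sqrt_le_sqrt h1
          linarith
        · intro h
          subst h
          simp only [norm_zero]
          rw [show (0:ℝ)^2 = 0 by norm_num, hf0, Real.sqrt_zero]
          exact Real.sqrt_pos.2 ha
      obtain ⟨y, hy, hylt⟩ := exists_lt_of_csInf_lt hne (show a < 4 * a by linarith)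
      obtain ⟨t0, ht0, rfl⟩ := hy
      have ht0' : (0:ℝ) < t0 := Set.mem_Ioi.1 ht0
      have hsub : Metric.ball (0 : EuclideanSpace ℝ (Fin n)) (Real.sqrt t0) ⊆
          {η : EuclideanSpace ℝ (Fin n) | Real.sqrt (f (‖η - 0‖ ^ 2)) < 2 * Real.sqrt a} := by
        intro η hη
        rw [Metric.mem_ball, dist_zero_right] at hη
        simp only [Set.mem_setOf_eq, sub_zero]
        have h2 : f (‖η‖ ^ 2) < 4 * a := by
          rcases eq_or_ne ‖η‖ 0 with h | h
          · rw [h, show (0:ℝ)^2 = 0 by norm_num, hf0]; linarith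
          · have hlt : ‖η‖ ^ 2 < t0 := (Real.lt_sqrt (norm_nonneg _)).1 hη
            have hηp : (0:ℝ) < ‖η‖ ^ 2 := by
              have := (norm_nonneg η).lt_of_ne (Ne.symm h)
              positivity
            have : f (‖η‖ ^ 2) ≤ f t0 := hmono (Set.mem_Ioi.2 hηp) ht0 hlt.le
            linarith
        rw [Real.sqrt_lt' (by positivity : (0:ℝ) < 2 * Real.sqrt a)]
        calc f (‖η‖ ^ 2) < 4 * a := h2
          _ = (2 * Real.sqrt a) ^ 2 := by rw [mul_pow, Real.sq_sqrt ha.le]; ring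
      have hposball : 0 < volume (Metric.ball (0 : EuclideanSpace ℝ (Fin n)) (Real.sqrt t0)) :=
        Metric.measure_ball_pos _ _ (Real.sqrt_pos.2 ht0')
      have hineq := H 0 (Real.sqrt a) (Real.sqrt_pos.2 ha)
      rw [hset1, measure_singleton, mul_zero] at hineq
      exact hposball.ne' (le_zero_iff.1 (le_trans (measure_mono hsub) hineq))
    have notRHS : ¬ (∃ C : ℝ, 1 < C ∧
        (1 : EReal) < Filter.liminf (fun r : ℝ => ((f (C * r) / f r : ℝ) : EReal)) Filter.atTop ∧
        (1 : EReal) < Filter.liminf (fun r : ℝ => ((f (C * r) / f r : ℝ) : EReal))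
            (nhdsWithin 0 (Set.Ioi (0 : ℝ)))) := by
      rintro ⟨C, hC, -, h0⟩
      have hC0 : (0:ℝ) < C := lt_trans one_pos hC
      have ht1 : Filter.Tendsto f (nhdsWithin 0 (Set.Ioi (0:ℝ))) (nhds a) :=
        hmono.tendsto_nhdsGT hbdd
      have hmul : Filter.Tendsto (fun r : ℝ => C * r) (nhdsWithin 0 (Set.Ioi (0:ℝ)))
          (nhdsWithin 0 (Set.Ioi (0:ℝ))) := by
        apply tendsto_nhdsWithin_of_tendsto_nhds_of_eventually_within
        · have h : Filter.Tendsto (fun r : ℝ => C * r) (nhds 0) (nhds (C * 0)) :=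
            Filter.Tendsto.const_mul C (Filter.tendsto_id (x := nhds (0:ℝ)))
          rw [mul_zero] at h
          exact h.mono_left nhdsWithin_le_nhds
        · filter_upwards [self_mem_nhdsWithin] with r hr
          exact Set.mem_Ioi.2 (mul_pos hC0 (Set.mem_Ioi.1 hr))
      have ht2 : Filter.Tendsto (fun r : ℝ => f (C * r)) (nhdsWithin 0 (Set.Ioi (0:ℝ)))
          (nhds a) := ht1.comp hmul
      have hratio : Filter.Tendsto (fun r : ℝ => f (C * r) / f r)
          (nhdsWithin 0 (Set.Ioi (0:ℝ))) (nhds 1) := by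
        have h := ht2.div ht1 ha.ne'
        rwa [div_self ha.ne'] at h
      have hliminf : Filter.liminf (fun r : ℝ => ((f (C * r) / f r : ℝ) : EReal))
          (nhdsWithin 0 (Set.Ioi (0:ℝ))) = (1 : EReal) := by
        apply Filter.Tendsto.liminf_eq
        rw [show (1 : EReal) = ((1:ℝ) : EReal) from rfl]
        exact EReal.tendsto_coe.2 hratio
      rw [hliminf] at h0
      exact lt_irrefl _ h0
    exact iff_of_false notLHS notRHS
end

section
/- Let ψ : ℝⁿ → [0,∞) be measurable with e^{−tψ} ∈ L¹(ℝⁿ). Then p_t(0) := (2π)^{−n}∫ e^{−tψ} dξ satisfies the lower bound (2π)ⁿ p_t(0) ≥ e^{−1} λ({ξ : ψ(ξ) < 1/t}). If moreover there are constants γ₀ ≥ 1 and α ≥ 0 with λ({ψ < c²r²}) ≤ γ₀ c^α λ({ψ < r²}) for all c ≥ 1, r > 0, then also (2π)ⁿ p_t(0) ≤ κ₁ λ({ξ : ψ(ξ) < 1/t}) with κ₁ = 1 − e^{−1} + γ₀ ∫₁^∞ r^{α/2} e^{−r} dr; hence p_t(0) ≍ λ(B^{d_ψ}(0, 1/√t)).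 -/
/-!
With `f = tψ`, Tonelli gives the layer-cake identity `∫ e^{-f} = ∫₀^∞ λ{f < r} e^{-r} dr`, and
`r ↦ λ{f < r}` is monotone. Keeping only `r > 1` gives the lower bound `e⁻¹ λ{f < 1}`. For the
upper bound, `λ{f < r} ≤ λ{f < 1}` on `(0, 1]`, while for `r ≥ 1` the doubling condition with
`c = √r` and radius `1/√t` gives `λ{f < r} ≤ γ₀ r^{α/2} λ{f < 1}`.
-/

open MeasureTheory Set Real ENNReal

theorem lintegral_Ioi_ofReal_exp_neg (c : ℝ) :
    ∫⁻ r in Ioi c, ENNReal.ofReal (exp (-r)) = ENNReal.ofReal (exp (-c)) := by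
  rw [← ofReal_integral_eq_lintegral_ofReal (integrableOn_exp_neg_Ioi c)
    (ae_of_all _ fun r => (exp_pos _).le), integral_exp_neg_Ioi]

theorem lintegral_Ioc_zero_one_ofReal_exp_neg :
    ∫⁻ r in Ioc 0 1, ENNReal.ofReal (exp (-r)) = ENNReal.ofReal (1 - exp (-1)) := by
  have hint : IntegrableOn (fun r : ℝ => exp (-r)) (Ioi 0) := integrableOn_exp_neg_Ioi 0
  rw [← ofReal_integral_eq_lintegral_ofReal (hint.mono_set Ioc_subset_Ioi_self)
    (ae_of_all _ fun r => (exp_pos _).le), ← intervalIntegral.integral_of_le zero_le_one,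
    ← intervalIntegral.integral_Ioi_sub_Ioi hint zero_le_one, integral_exp_neg_Ioi,
    integral_exp_neg_Ioi, neg_zero, exp_zero]

theorem setIntegral_Ioi_one_rpow_mul_exp_neg_nonneg (β : ℝ) :
    0 ≤ ∫ r in Ioi 1, r ^ β * exp (-r) :=
  setIntegral_nonneg measurableSet_Ioi fun _ hr =>
    mul_nonneg (rpow_nonneg (zero_le_one.trans hr.le) _) (exp_pos _).le

section LayerCake

variable {X : Type*} [MeasurableSpace X] {μ : Measure X} [SFinite μ] {f : X → ℝ}

theorem lintegral_ofReal_exp_neg_eq_lintegral_measure_lt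
    (hf : Measurable f) (hf0 : ∀ x, 0 ≤ f x) :
    ∫⁻ x, ENNReal.ofReal (exp (-f x)) ∂μ =
      ∫⁻ r in Ioi 0, μ {x | f x < r} * ENNReal.ofReal (exp (-r)) := by
  set g : ℝ → ℝ≥0∞ := fun r => ENNReal.ofReal (exp (-r))
  have hmeas : Measurable (Function.uncurry fun x r => (Ioi (f x)).indicator g r) := by
    have : (Function.uncurry fun x r => (Ioi (f x)).indicator g r) =
        {p : X × ℝ | f p.1 < p.2}.indicator (fun p => g p.2) := by
      ext ⟨x, r⟩; simp [indicator_apply]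
    rw [this]
    exact (by fun_prop : Measurable fun p : X × ℝ => g p.2).indicator
      (measurableSet_lt (hf.comp measurable_fst) measurable_snd)
  calc ∫⁻ x, g (f x) ∂μ = ∫⁻ x, (∫⁻ r in Ioi 0, (Ioi (f x)).indicator g r) ∂μ := by
        refine lintegral_congr fun x => ?_
        rw [lintegral_indicator measurableSet_Ioi, Measure.restrict_restrict measurableSet_Ioi,
          Ioi_inter_Ioi, sup_eq_left.2 (hf0 x), lintegral_Ioi_ofReal_exp_neg]
    _ = ∫⁻ r in Ioi 0, (∫⁻ x, (Ioi (f x)).indicator g r ∂μ) :=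
        lintegral_lintegral_swap hmeas.aemeasurable
    _ = ∫⁻ r in Ioi 0, μ {x | f x < r} * g r := by
        refine lintegral_congr fun r => ?_
        rw [mul_comm, ← lintegral_indicator_const (measurableSet_lt hf measurable_const)]
        refine lintegral_congr fun x => ?_
        simp [indicator_apply]

theorem ofReal_exp_neg_one_mul_measure_lt_one_le (hf : Measurable f) (hf0 : ∀ x, 0 ≤ f x) :
    ENNReal.ofReal (exp (-1)) * μ {x | f x < 1} ≤ ∫⁻ x, ENNReal.ofReal (exp (-f x)) ∂μ := by
  rw [lintegral_ofReal_exp_neg_eq_lintegral_measure_lt hf hf0]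
  calc ENNReal.ofReal (exp (-1)) * μ {x | f x < 1}
      = ∫⁻ r in Ioi 1, μ {x | f x < 1} * ENNReal.ofReal (exp (-r)) := by
        rw [lintegral_const_mul _ (by fun_prop), lintegral_Ioi_ofReal_exp_neg, mul_comm]
    _ ≤ ∫⁻ r in Ioi 1, μ {x | f x < r} * ENNReal.ofReal (exp (-r)) :=
        setLIntegral_mono' measurableSet_Ioi fun r hr =>
          mul_le_mul_left (measure_mono fun x (hx : f x < 1) => hx.trans hr) _
    _ ≤ ∫⁻ r in Ioi 0, μ {x | f x < r} * ENNReal.ofReal (exp (-r)) :=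
        lintegral_mono_set (Ioi_subset_Ioi zero_le_one)

theorem lintegral_ofReal_exp_neg_le {γ β : ℝ} (hf : Measurable f) (hf0 : ∀ x, 0 ≤ f x)
    (hγ : 0 ≤ γ) (hβ : -1 < β)
    (hgrowth : ∀ r, 1 ≤ r → μ {x | f x < r} ≤ ENNReal.ofReal (γ * r ^ β) * μ {x | f x < 1}) :
    ∫⁻ x, ENNReal.ofReal (exp (-f x)) ∂μ ≤
      ENNReal.ofReal (1 - exp (-1) + γ * ∫ r in Ioi 1, r ^ β * exp (-r)) * μ {x | f x < 1} := by
  set M := μ {x | f x < 1}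
  have hint : IntegrableOn (fun r : ℝ => r ^ β * exp (-r)) (Ioi 1) := by
    have := integrableOn_rpow_mul_exp_neg_rpow hβ one_pos
    simp only [Real.rpow_one] at this
    exact this.mono_set (Ioi_subset_Ioi zero_le_one)
  have hnonneg : ∀ r ∈ Ioi (1 : ℝ), 0 ≤ γ * (r ^ β * exp (-r)) := fun r hr =>
    mul_nonneg hγ (mul_nonneg (rpow_nonneg (zero_le_one.trans hr.le) _) (exp_pos _).le)
  have hsmall : ∫⁻ r in Ioc 0 1, μ {x | f x < r} * ENNReal.ofReal (exp (-r)) ≤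
      ENNReal.ofReal (1 - exp (-1)) * M :=
    calc ∫⁻ r in Ioc 0 1, μ {x | f x < r} * ENNReal.ofReal (exp (-r))
        ≤ ∫⁻ r in Ioc 0 1, M * ENNReal.ofReal (exp (-r)) :=
          setLIntegral_mono' measurableSet_Ioc fun r hr =>
            mul_le_mul_left (measure_mono fun x hx => lt_of_lt_of_le hx hr.2) _
      _ = ENNReal.ofReal (1 - exp (-1)) * M := by
          rw [lintegral_const_mul _ (by fun_prop), lintegral_Ioc_zero_one_ofReal_exp_neg,
            mul_comm]
  have hlarge : ∫⁻ r in Ioi 1, μ {x | f x < r} * ENNReal.ofReal (exp (-r)) ≤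
      ENNReal.ofReal (γ * ∫ r in Ioi 1, r ^ β * exp (-r)) * M :=
    calc ∫⁻ r in Ioi 1, μ {x | f x < r} * ENNReal.ofReal (exp (-r))
        ≤ ∫⁻ r in Ioi 1, ENNReal.ofReal (γ * (r ^ β * exp (-r))) * M :=
          setLIntegral_mono' measurableSet_Ioi fun r hr => by
            calc μ {x | f x < r} * ENNReal.ofReal (exp (-r))
                ≤ ENNReal.ofReal (γ * r ^ β) * M * ENNReal.ofReal (exp (-r)) :=
                  mul_le_mul_left (hgrowth r (le_of_lt hr)) _
              _ = ENNReal.ofReal (γ * (r ^ β * exp (-r))) * M := by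
                  rw [mul_right_comm, ← ofReal_mul (mul_nonneg hγ
                    (rpow_nonneg (zero_le_one.trans hr.le) _)), mul_assoc]
      _ = ENNReal.ofReal (γ * ∫ r in Ioi 1, r ^ β * exp (-r)) * M := by
          rw [lintegral_mul_const _ (by fun_prop), ← integral_const_mul,
            ofReal_integral_eq_lintegral_ofReal (hint.const_mul γ)
              (ae_restrict_of_forall_mem measurableSet_Ioi hnonneg)]
  rw [lintegral_ofReal_exp_neg_eq_lintegral_measure_lt hf hf0, ← Ioc_union_Ioi_eq_Ioi zero_le_one,
    ofReal_add (sub_nonneg.2 (exp_le_one_iff.2 (by norm_num)))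
      (mul_nonneg hγ (setIntegral_Ioi_one_rpow_mul_exp_neg_nonneg β)), add_mul]
  exact (lintegral_union_le _ _ _).trans (add_le_add hsmall hlarge)

end LayerCake

theorem measure_mul_lt_le_of_doubling {X : Type*} [MeasurableSpace X] {μ : Measure X}
    {ψ : X → ℝ} {t γ α r : ℝ} (ht : 0 < t)
    (hdoub : ∀ c : ℝ, 1 ≤ c → ∀ r : ℝ, 0 < r →
      μ {x | ψ x < c ^ 2 * r ^ 2} ≤ ENNReal.ofReal (γ * c ^ α) * μ {x | ψ x < r ^ 2})
    (hr : 1 ≤ r) :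
    μ {x | t * ψ x < r} ≤ ENNReal.ofReal (γ * r ^ (α / 2)) * μ {x | t * ψ x < 1} := by
  have hr0 : 0 ≤ r := zero_le_one.trans hr
  have hlevel : ∀ s, {x | t * ψ x < s} = {x | ψ x < s / t} := fun s => by
    ext x; simp only [mem_ofPred_eq, lt_div_iff₀' ht]
  have hpow : √r ^ α = r ^ (α / 2) := by
    rw [sqrt_eq_rpow, ← rpow_mul hr0]; ring_nf
  have := hdoub √r (one_le_sqrt.2 hr) (√t)⁻¹ (by positivity)
  rwa [inv_pow, sq_sqrt hr0, sq_sqrt ht.le, hpow, ← div_eq_mul_inv, ← one_div,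
    ← hlevel, ← hlevel] at this

/-- Two-sided on-diagonal estimate: `(2π)ⁿ p_t(0) = ∫ e^{-tψ}` is bounded below by
`e⁻¹ λ({ψ < 1/t})` and, under a volume doubling-type condition, above by
`κ₁ λ({ψ < 1/t})` with `κ₁ = 1 - e⁻¹ + γ₀ ∫₁^∞ r^{α/2} e^{-r} dr`. -/
theorem statement12 {n : ℕ} (ψ : EuclideanSpace ℝ (Fin n) → ℝ)
    (hmeas : Measurable ψ) (hpos : ∀ ξ, 0 ≤ ψ ξ)
    (t : ℝ) (ht : 0 < t)
    (hint : Integrable (fun ξ : EuclideanSpace ℝ (Fin n) => Real.exp (-t * ψ ξ))) :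
    (Real.exp (-1) * (volume {ξ : EuclideanSpace ℝ (Fin n) | ψ ξ < 1 / t}).toReal ≤
      ∫ ξ : EuclideanSpace ℝ (Fin n), Real.exp (-t * ψ ξ)) ∧
    (∀ γ₀ α : ℝ, 1 ≤ γ₀ → 0 ≤ α →
      (∀ c : ℝ, 1 ≤ c → ∀ r : ℝ, 0 < r →
        volume {ξ : EuclideanSpace ℝ (Fin n) | ψ ξ < c ^ 2 * r ^ 2} ≤
          ENNReal.ofReal (γ₀ * c ^ α) *
            volume {ξ : EuclideanSpace ℝ (Fin n) | ψ ξ < r ^ 2}) →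
      ∫ ξ : EuclideanSpace ℝ (Fin n), Real.exp (-t * ψ ξ) ≤
        (1 - Real.exp (-1) + γ₀ * ∫ r in Set.Ioi (1 : ℝ), r ^ (α / 2) * Real.exp (-r)) *
          (volume {ξ : EuclideanSpace ℝ (Fin n) | ψ ξ < 1 / t}).toReal) := by
  have hf : Measurable fun ξ => t * ψ ξ := hmeas.const_mul t
  have hf0 : ∀ ξ, 0 ≤ t * ψ ξ := fun ξ => mul_nonneg ht.le (hpos ξ)
  have hlevel : {ξ | ψ ξ < 1 / t} = {ξ | t * ψ ξ < 1} := by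
    ext ξ; simp only [mem_ofPred_eq, lt_div_iff₀' ht]
  simp only [neg_mul] at hint ⊢
  rw [hlevel, integral_eq_lintegral_of_nonneg_ae (ae_of_all _ fun ξ => (exp_pos _).le)
    hint.aestronglyMeasurable]
  have hfin := hint.lintegral_lt_top.ne
  have hlower := ofReal_exp_neg_one_mul_measure_lt_one_le (μ := volume) hf hf0
  refine ⟨?_, fun γ₀ α hγ hα hdoub => ?_⟩
  · simpa [toReal_mul, toReal_ofReal (exp_pos _).le] using toReal_mono hfin hlower
  · have hM := (lt_top_of_mul_ne_top_right (ne_top_of_le_ne_top hfin hlower)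
      (ofReal_pos.2 (exp_pos _)).ne').ne
    have hupper := lintegral_ofReal_exp_neg_le hf hf0 (zero_le_one.trans hγ)
      (by linarith : -1 < α / 2) fun r hr => measure_mul_lt_le_of_doubling ht hdoub hr
    refine (toReal_mono (mul_ne_top ofReal_ne_top hM) hupper).trans_eq ?_
    rw [toReal_mul, toReal_ofReal (add_nonneg (sub_nonneg.2 (exp_le_one_iff.2 (by norm_num)))
      (mul_nonneg (zero_le_one.trans hγ) (setIntegral_Ioi_one_rpow_mul_exp_neg_nonneg _)))]
end

section
/- For the 1-dimensional Cauchy semigroup density p_t(x) = t/(π(t² + x²)), one has the exact representation p_t(x) = p_t(0)·e^{−δ_t²(x)} where δ_t²(x) = ln((x² + t²)/t²); moreover, for each fixed t > 0, the map (x,y) ↦ √(ln((|x−y|² + t²)/t²)) is a metric on ℝ. -/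
/-!
Since `log (1 + s)` is concave and vanishes at `0`, the ratio `log (1 + s) / s` decreases on
`(0, ∞)`, hence so does `φ u / u` for `φ u = √(log (1 + u²))`. A nonnegative function with
decreasing `φ u / u` is subadditive on `[0, ∞)`: `φ (a + b)` is the sum of `a` and `b` times
`φ (a + b) / (a + b)`, and each term is bounded by `φ a`, resp. `φ b`. Being also even and
increasing on `[0, ∞)`, `φ` is subadditive on all of `ℝ`, so `(x, y) ↦ φ ((x - y) / t)` satisfies
the triangle inequality. The representation of `p_t` is `e^{-log r} = 1 / r`.
-/

open Real Set

theorem map_add_le_add_of_antitoneOn_div {φ : ℝ → ℝ} (hφ0 : 0 ≤ φ 0)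
    (hφ : AntitoneOn (fun u ↦ φ u / u) (Ioi 0)) {a b : ℝ} (ha : 0 ≤ a) (hb : 0 ≤ b) :
    φ (a + b) ≤ φ a + φ b := by
  rcases ha.eq_or_lt with rfl | ha
  · simpa using hφ0
  rcases hb.eq_or_lt with rfl | hb
  · simpa using hφ0
  have hab : 0 < a + b := by positivity
  have hφa : φ (a + b) / (a + b) ≤ φ a / a := hφ ha hab (by linarith)
  have hφb : φ (a + b) / (a + b) ≤ φ b / b := hφ hb hab (by linarith)
  calc φ (a + b) = a * (φ (a + b) / (a + b)) + b * (φ (a + b) / (a + b)) := by field_simp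
    _ ≤ a * (φ a / a) + b * (φ b / b) := by gcongr
    _ = φ a + φ b := by field_simp

theorem concaveOn_log_one_add : ConcaveOn ℝ (Ioi (-1)) fun s : ℝ ↦ log (1 + s) := by
  have hpre : (fun s : ℝ ↦ 1 + s) ⁻¹' Ioi 0 = Ioi (-1) := by
    ext s; simp [neg_lt_iff_pos_add']
  have h := strictConcaveOn_log_Ioi.concaveOn.translate_right 1
  rw [hpre] at h
  exact h

theorem antitoneOn_log_one_add_div : AntitoneOn (fun s : ℝ ↦ log (1 + s) / s) (Ioi 0) := by
  intro a ha b hb hab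
  have hmem : ∀ s ∈ Ioi (0 : ℝ), s ∈ {y ∈ Ioi (-1) | 0 < y} := fun s hs ↦
    ⟨mem_Ioi.2 (neg_one_lt_zero.trans hs), hs⟩
  simpa [slope_def_field] using
    concaveOn_log_one_add.antitoneOn_slope_gt (by norm_num) (hmem a ha) (hmem b hb) hab

noncomputable def sqrtLogOneAddSq (u : ℝ) : ℝ := √(log (1 + u ^ 2))

theorem sqrtLogOneAddSq_abs (u : ℝ) : sqrtLogOneAddSq |u| = sqrtLogOneAddSq u := by
  rw [sqrtLogOneAddSq, sqrtLogOneAddSq, sq_abs]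

theorem sqrtLogOneAddSq_neg (u : ℝ) : sqrtLogOneAddSq (-u) = sqrtLogOneAddSq u := by
  rw [sqrtLogOneAddSq, sqrtLogOneAddSq, neg_sq]

theorem sqrtLogOneAddSq_eq_zero_iff {u : ℝ} : sqrtLogOneAddSq u = 0 ↔ u = 0 := by
  rw [sqrtLogOneAddSq, sqrt_eq_zero', log_nonpos_iff (by positivity)]
  constructor
  · intro h; nlinarith [sq_nonneg u]
  · rintro rfl; norm_num

theorem monotoneOn_sqrtLogOneAddSq : MonotoneOn sqrtLogOneAddSq (Ici 0) := by
  intro a ha b _ hab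
  have hsq : a ^ 2 ≤ b ^ 2 := pow_le_pow_left₀ ha hab 2
  exact sqrt_le_sqrt (log_le_log (by positivity) (by linarith))

theorem antitoneOn_sqrtLogOneAddSq_div :
    AntitoneOn (fun u ↦ sqrtLogOneAddSq u / u) (Ioi 0) := by
  have hdiv : ∀ u ∈ Ioi (0 : ℝ), sqrtLogOneAddSq u / u = √(log (1 + u ^ 2) / u ^ 2) := by
    intro u hu
    rw [sqrtLogOneAddSq, sqrt_div' _ (sq_nonneg u), sqrt_sq (le_of_lt hu)]
  intro a ha b hb hab
  simp only [hdiv a ha, hdiv b hb]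
  exact sqrt_le_sqrt <| antitoneOn_log_one_add_div (mem_Ioi.2 (pow_pos ha 2))
    (mem_Ioi.2 (pow_pos hb 2)) (pow_le_pow_left₀ (le_of_lt ha) hab 2)

theorem sqrtLogOneAddSq_add_le (u v : ℝ) :
    sqrtLogOneAddSq (u + v) ≤ sqrtLogOneAddSq u + sqrtLogOneAddSq v := by
  have hmono : sqrtLogOneAddSq |u + v| ≤ sqrtLogOneAddSq (|u| + |v|) :=
    monotoneOn_sqrtLogOneAddSq (mem_Ici.2 (abs_nonneg _))
      (mem_Ici.2 (add_nonneg (abs_nonneg _) (abs_nonneg _))) (abs_add_le u v)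
  have hsub := map_add_le_add_of_antitoneOn_div (φ := sqrtLogOneAddSq) (sqrt_nonneg _)
    antitoneOn_sqrtLogOneAddSq_div (abs_nonneg u) (abs_nonneg v)
  simpa only [sqrtLogOneAddSq_abs] using hmono.trans hsub

theorem sqrt_log_sq_add_sq_div_sq {t : ℝ} (ht : t ≠ 0) (u : ℝ) :
    √(log ((u ^ 2 + t ^ 2) / t ^ 2)) = sqrtLogOneAddSq (u / t) := by
  rw [sqrtLogOneAddSq, div_pow, add_div, div_self (pow_ne_zero 2 ht), add_comm]

/-- For the Cauchy density `p_t(x) = t/(π(t²+x²))` one has the Gaussian-type representation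
`p_t(x) = p_t(0) e^{-δ_t²(x)}` with `δ_t²(x) = ln((x²+t²)/t²)`, and
`(x,y) ↦ √(ln((|x-y|²+t²)/t²))` is a metric on `ℝ`. -/
theorem statement13 (t : ℝ) (ht : 0 < t) :
    (∀ x : ℝ,
      t / (Real.pi * (t ^ 2 + x ^ 2)) =
        t / (Real.pi * (t ^ 2 + (0 : ℝ) ^ 2)) *
          Real.exp (-Real.log ((x ^ 2 + t ^ 2) / t ^ 2))) ∧
    (∀ x y : ℝ,
      (Real.sqrt (Real.log (((x - y) ^ 2 + t ^ 2) / t ^ 2)) = 0 ↔ x = y)) ∧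
    (∀ x y : ℝ,
      Real.sqrt (Real.log (((x - y) ^ 2 + t ^ 2) / t ^ 2)) =
        Real.sqrt (Real.log (((y - x) ^ 2 + t ^ 2) / t ^ 2))) ∧
    (∀ x y z : ℝ,
      Real.sqrt (Real.log (((x - z) ^ 2 + t ^ 2) / t ^ 2)) ≤
        Real.sqrt (Real.log (((x - y) ^ 2 + t ^ 2) / t ^ 2)) +
          Real.sqrt (Real.log (((y - z) ^ 2 + t ^ 2) / t ^ 2))) := by
  simp only [sqrt_log_sq_add_sq_div_sq ht.ne']
  refine ⟨fun x ↦ ?_, fun x y ↦ ?_, fun x y ↦ ?_, fun x y z ↦ ?_⟩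
  · rw [exp_neg, exp_log (by positivity)]
    field_simp
    ring
  · rw [sqrtLogOneAddSq_eq_zero_iff, div_eq_zero_iff, sub_eq_zero]
    simp [ht.ne']
  · rw [← neg_sub, neg_div, sqrtLogOneAddSq_neg]
  · simpa only [← add_div, sub_add_sub_cancel] using
      sqrtLogOneAddSq_add_le ((x - y) / t) ((y - z) / t)
end

section
/- Let m be a probability measure on [0,∞), let G : s ↦ 1/(2s), and set n(ds) = (s/π)^{n/2}·G♯m(ds) (pull-back under G). Suppose the normalized measure n* = n/L[n](0) has Laplace transform L[n*](λ) = e^{−f(λ)} for some Bernstein function f. Then the normal variance mixture p(x) = ∫₀^∞ (2πs)^{−n/2} e^{−|x|²/(2s)} m(ds) satisfies p(x) = p(0)·e^{−f(|x|²)} for all x ∈ ℝⁿ. -/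
open MeasureTheory

/-- The measure `n(ds) = (s/π)^{n/2} G♯m(ds)` where `G : s ↦ 1/(2s)`. -/
noncomputable def mixMeasure (n : ℕ) (m : Measure ℝ) : Measure ℝ :=
  (Measure.map (fun s : ℝ => 1 / (2 * s)) m).withDensity
    (fun s : ℝ => ENNReal.ofReal ((s / Real.pi) ^ ((n : ℝ) / 2)))

lemma keyA (n : ℕ) (m : Measure ℝ)
    (hsupp : m (Set.Iio (0 : ℝ)) = 0) (lam : ℝ) :
    (∫ s : ℝ, (2 * Real.pi * s) ^ (-(n : ℝ) / 2) * Real.exp (-lam / (2 * s)) ∂m)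
      = ∫ s : ℝ, Real.exp (-lam * s) ∂(mixMeasure n m) := by
  have hG : Measurable (fun s : ℝ => 1 / (2 * s)) :=
    measurable_const.div (measurable_const.mul measurable_id)
  have hρ : Measurable (fun s : ℝ => ((s / Real.pi) ^ ((n : ℝ) / 2)).toNNReal) :=
    ((measurable_id.div_const Real.pi).pow measurable_const).real_toNNReal
  have h1 : (∫ s : ℝ, Real.exp (-lam * s) ∂(mixMeasure n m))
      = ∫ s : ℝ, (((s / Real.pi) ^ ((n : ℝ) / 2)).toNNReal : ℝ) • Real.exp (-lam * s)
          ∂(Measure.map (fun s : ℝ => 1 / (2 * s)) m) := by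
    rw [mixMeasure]
    simp only [ENNReal.ofReal]
    exact integral_withDensity_eq_integral_smul hρ _
  have h2 : (∫ s : ℝ, (((s / Real.pi) ^ ((n : ℝ) / 2)).toNNReal : ℝ) • Real.exp (-lam * s)
          ∂(Measure.map (fun s : ℝ => 1 / (2 * s)) m))
      = ∫ s : ℝ, (((1 / (2 * s) / Real.pi) ^ ((n : ℝ) / 2)).toNNReal : ℝ) •
          Real.exp (-lam * (1 / (2 * s))) ∂m := by
    refine integral_map hG.aemeasurable ?_
    exact (hρ.coe_nnreal_real.smul ((measurable_id.const_mul (-lam)).exp)).aestronglyMeasurable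
  rw [h1, h2]
  refine integral_congr_ae ?_
  have hae : ∀ᵐ s ∂m, 0 ≤ s := by
    rw [ae_iff]
    convert hsupp using 2
    ext s; simp [Set.Iio, not_le]
  filter_upwards [hae] with s hs
  have hπ : (0:ℝ) < Real.pi := Real.pi_pos
  have h2πs : (0:ℝ) ≤ 2 * Real.pi * s := by positivity
  have hb : (0:ℝ) ≤ 1 / (2 * s) / Real.pi := by positivity
  rw [smul_eq_mul, Real.coe_toNNReal _ (Real.rpow_nonneg hb _)]
  have harg : 1 / (2 * s) / Real.pi = (2 * Real.pi * s)⁻¹ := by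
    rw [div_div, one_div, mul_right_comm]
  have hexp : ((-1 : ℝ)) * ((n:ℝ)/2) = -(n:ℝ)/2 := by ring
  rw [harg, ← Real.rpow_neg_one, ← Real.rpow_mul h2πs, hexp, mul_one_div]

/-- If the normalization `n* = n/L[n](0)` of `n(ds) = (s/π)^{n/2} G♯m(ds)` has Laplace
transform `e^{-f}` for a Bernstein function `f`, then the normal variance mixture
`p(x) = ∫₀^∞ (2πs)^{-n/2} e^{-|x|²/(2s)} m(ds)` satisfies `p(x) = p(0) e^{-f(|x|²)}`. -/
theorem statement19 {n : ℕ} (m : Measure ℝ) [IsProbabilityMeasure m]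
    (hsupp : m (Set.Iio (0 : ℝ)) = 0)
    (f : ℝ → ℝ) (hf : IsBernstein f)
    (hlap : ∀ lam : ℝ, 0 ≤ lam →
      (∫ s : ℝ, Real.exp (-lam * s)
          ∂((mixMeasure n m Set.univ)⁻¹ • mixMeasure n m)) = Real.exp (-f lam)) :
    ∀ x : EuclideanSpace ℝ (Fin n),
      (∫ s : ℝ, (2 * Real.pi * s) ^ (-(n : ℝ) / 2) * Real.exp (-‖x‖ ^ 2 / (2 * s)) ∂m) =
        (∫ s : ℝ, (2 * Real.pi * s) ^ (-(n : ℝ) / 2) *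
            Real.exp (-‖(0 : EuclideanSpace ℝ (Fin n))‖ ^ 2 / (2 * s)) ∂m) *
          Real.exp (-f (‖x‖ ^ 2)) := by
  intro x
  set μ := mixMeasure n m with hμ
  set c := μ Set.univ with hc
  have h0 := hlap 0 le_rfl
  simp only [neg_zero, zero_mul, Real.exp_zero] at h0
  rw [integral_const, smul_eq_mul, mul_one, Measure.real] at h0
  have hsm : ((c⁻¹ • μ) Set.univ) = c⁻¹ * c := by
    rw [Measure.smul_apply, smul_eq_mul]
  rw [hsm] at h0
  have hc0 : c ≠ 0 := by
    intro h
    rw [h, mul_zero] at h0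
    have h0' : Real.exp (-f 0) = 0 := by simpa using h0.symm
    exact Real.exp_ne_zero _ h0'
  have hctop : c ≠ ⊤ := by
    intro h
    rw [h, ENNReal.inv_top, zero_mul] at h0
    have h0' : Real.exp (-f 0) = 0 := by simpa using h0.symm
    exact Real.exp_ne_zero _ h0'
  have hcR : 0 < c.toReal := ENNReal.toReal_pos hc0 hctop
  have hL : ∀ lam : ℝ, 0 ≤ lam →
      (∫ s : ℝ, Real.exp (-lam * s) ∂μ) = c.toReal * Real.exp (-f lam) := by
    intro lam hlam
    have h := hlap lam hlam
    rw [integral_smul_measure, smul_eq_mul, ENNReal.toReal_inv,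
      inv_mul_eq_iff_eq_mul₀ hcR.ne'] at h
    exact h
  have hp0 : (∫ s : ℝ, (2 * Real.pi * s) ^ (-(n : ℝ) / 2) *
      Real.exp (-‖(0 : EuclideanSpace ℝ (Fin n))‖ ^ 2 / (2 * s)) ∂m) = c.toReal := by
    have hz : ‖(0 : EuclideanSpace ℝ (Fin n))‖ ^ 2 = 0 := by simp
    rw [hz]
    have k := keyA n m hsupp 0
    simp only [neg_zero, zero_mul, Real.exp_zero] at k ⊢
    rw [k, integral_const, smul_eq_mul, mul_one, Measure.real]
  rw [hp0, keyA n m hsupp (‖x‖ ^ 2), hL _ (by positivity)]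
end
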